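/- Let A be a Hopf algebra and M a left A-comodule algebra. If there exists an algebra map γ: A → M ⊗ M^op, γ(a) = Σ a⁺ ⊗ a⁻, satisfying Σ m₍₋₁₎⁺ ⊗ m₍₋₁₎⁻ m₍₀₎ = m ⊗ 1 for all m ∈ M and Σ a⁺₍₋₁₎ ⊗ a⁺₍₀₎ a⁻ = a ⊗ 1 for all a ∈ A, then the left Galois map κ_l: M⊗M → A⊗M, m⊗n ↦ Σ m₍₋₁₎ ⊗ m₍₀₎ n, is bijective, with inverse a⊗m ↦ Σ a⁺ ⊗ a⁻ m. -/
import Mathlib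


open scoped TensorProduct

/-- Given `f : P →ₗ Q ⊗ M`, the map `P ⊗ M →ₗ Q ⊗ M`, `p ⊗ m ↦ Σ f(p)₁ ⊗ (f(p)₂ · m)`.
For `f = δ` the left coaction of a comodule algebra this is the left Galois map
`κ_l : m ⊗ n ↦ Σ m₍₋₁₎ ⊗ m₍₀₎ n`; for `f = γ̃ : A →ₗ M ⊗ M` it is the candidate inverse
`a ⊗ m ↦ Σ a⁺ ⊗ a⁻ m`. -/
noncomputable def twistMulL (k : Type*) [CommRing k] (M P Q : Type*)
    [Ring M] [Algebra k M] [AddCommGroup P] [Module k P] [AddCommGroup Q] [Module k Q]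
    (f : P →ₗ[k] Q ⊗[k] M) : P ⊗[k] M →ₗ[k] Q ⊗[k] M :=
  LinearMap.lTensor Q (LinearMap.mul' k M) ∘ₗ (TensorProduct.assoc k Q M M).toLinearMap ∘ₗ
    LinearMap.rTensor M f

/-- `γ̃ : A →ₗ M ⊗ M` obtained from an algebra map `γ : A →ₐ M ⊗ M^op` by forgetting
the opposite-algebra structure on the second factor. -/
noncomputable def gammaTildeL (k : Type*) [CommRing k] (M A : Type*)
    [Ring M] [Algebra k M] [Ring A] [Algebra k A]
    (γ : A →ₐ[k] M ⊗[k] Mᵐᵒᵖ) : A →ₗ[k] M ⊗[k] M :=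
  TensorProduct.map LinearMap.id ((MulOpposite.opLinearEquiv k).symm :
      Mᵐᵒᵖ ≃ₗ[k] M).toLinearMap ∘ₗ γ.toLinearMap


private lemma twistMulL_tmul (k : Type*) [CommRing k] (M P Q : Type*)
    [Ring M] [Algebra k M] [AddCommGroup P] [Module k P] [AddCommGroup Q] [Module k Q]
    (f : P →ₗ[k] Q ⊗[k] M) (p : P) (m : M) :
    twistMulL k M P Q f (p ⊗ₜ[k] m) =
      LinearMap.lTensor Q (LinearMap.mulRight k m) (f p) := by
  have haux : ∀ y : Q ⊗[k] M,
      LinearMap.lTensor Q (LinearMap.mul' k M) ((TensorProduct.assoc k Q M M) (y ⊗ₜ[k] m)) =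
        LinearMap.lTensor Q (LinearMap.mulRight k m) y := by
    intro y
    induction y using TensorProduct.induction_on with
    | zero => simp
    | tmul q x => simp
    | add a b ha hb => simp [TensorProduct.add_tmul, ha, hb]
  simpa [twistMulL] using haux (f p)

private lemma twistMulL_lTensor (k : Type*) [CommRing k] (M P Q : Type*)
    [Ring M] [Algebra k M] [AddCommGroup P] [Module k P] [AddCommGroup Q] [Module k Q]
    (f : P →ₗ[k] Q ⊗[k] M) (n : M) (z : P ⊗[k] M) :
    twistMulL k M P Q f (LinearMap.lTensor P (LinearMap.mulRight k n) z) =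
      LinearMap.lTensor Q (LinearMap.mulRight k n) (twistMulL k M P Q f z) := by
  induction z using TensorProduct.induction_on with
  | zero => simp
  | tmul p x =>
      rw [LinearMap.lTensor_tmul, twistMulL_tmul, twistMulL_tmul]
      have : LinearMap.mulRight k (LinearMap.mulRight k n x) =
          (LinearMap.mulRight k n).comp (LinearMap.mulRight k x) := by
        ext y; simp [mul_assoc]
      rw [this, LinearMap.lTensor_comp, LinearMap.comp_apply]
  | add a b ha hb => simp [ha, hb]

/-- If `M` is a left `A`-comodule algebra over a Hopf algebra `A` and there is an algebra
map `γ : A → M ⊗ M^op`, `γ(a) = Σ a⁺ ⊗ a⁻`, with `Σ m₍₋₁₎⁺ ⊗ m₍₋₁₎⁻ m₍₀₎ = m ⊗ 1` and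
`Σ a⁺₍₋₁₎ ⊗ a⁺₍₀₎ a⁻ = a ⊗ 1`, then the left Galois map `κ_l : M ⊗ M → A ⊗ M`,
`m ⊗ n ↦ Σ m₍₋₁₎ ⊗ m₍₀₎ n`, is bijective with inverse `a ⊗ m ↦ Σ a⁺ ⊗ a⁻ m`;
i.e. `M` is a left `A`-Galois extension of `k`. -/
theorem left_galois_of_gamma {k A M : Type*} [CommRing k]
    [Ring A] [HopfAlgebra k A] [Ring M] [Algebra k M]
    (δ : M →ₐ[k] A ⊗[k] M)
    (hcoassoc : ∀ m : M,
      (TensorProduct.assoc k A A M)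
          ((LinearMap.rTensor M (Coalgebra.comul (R := k) (A := A))) (δ m)) =
        (LinearMap.lTensor A δ.toLinearMap) (δ m))
    (hcounit : ∀ m : M,
      (TensorProduct.lid k M)
        ((LinearMap.rTensor M (Coalgebra.counit (R := k) (A := A))) (δ m)) = m)
    (γ : A →ₐ[k] M ⊗[k] Mᵐᵒᵖ)
    (h1 : ∀ m : M, twistMulL k M A M (gammaTildeL k M A γ) (δ m) = m ⊗ₜ[k] 1)
    (h2 : ∀ a : A, twistMulL k M M A δ.toLinearMap ((gammaTildeL k M A γ) a) = a ⊗ₜ[k] 1) :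
    Function.Bijective (twistMulL k M M A δ.toLinearMap) ∧
    (∀ x : A ⊗[k] M,
      twistMulL k M M A δ.toLinearMap (twistMulL k M A M (gammaTildeL k M A γ) x) = x) ∧
    (∀ x : M ⊗[k] M,
      twistMulL k M A M (gammaTildeL k M A γ) (twistMulL k M M A δ.toLinearMap x) = x) := by

  have hinv1 : ∀ x : A ⊗[k] M,
      twistMulL k M M A δ.toLinearMap (twistMulL k M A M (gammaTildeL k M A γ) x) = x := by
    intro x
    induction x using TensorProduct.induction_on with
    | zero => simp
    | tmul a m =>
        rw [twistMulL_tmul, twistMulL_lTensor, h2, LinearMap.lTensor_tmul]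
        simp
    | add a b ha hb => simp [ha, hb]
  have hinv2 : ∀ x : M ⊗[k] M,
      twistMulL k M A M (gammaTildeL k M A γ) (twistMulL k M M A δ.toLinearMap x) = x := by
    intro x
    induction x using TensorProduct.induction_on with
    | zero => simp
    | tmul m n =>
        rw [twistMulL_tmul, twistMulL_lTensor, AlgHom.toLinearMap_apply, h1, LinearMap.lTensor_tmul]
        simp
    | add a b ha hb => simp [ha, hb]
  refine ⟨⟨?_, ?_⟩, hinv1, hinv2⟩
  · intro x y hxy
    have := congrArg (twistMulL k M A M (gammaTildeL k M A γ)) hxy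
    rwa [hinv2 x, hinv2 y] at this
  · intro y
    exact ⟨twistMulL k M A M (gammaTildeL k M A γ) y, hinv1 y⟩
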